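/- arXiv:2306.07947 — 4 statements merged into one kernel-verified Lean document; each statement's English description precedes it below -/
import Mathlib

section
/- In the Clifford algebra with generators ψ_i, ψ*_j (i, j ∈ ℤ) and relations {ψ_i, ψ_j} = {ψ*_i, ψ*_j} = 0, {ψ_i, ψ*_j} = δ_{i+j,0}, the normally ordered quadratic elements E_{ij} := :ψ_i ψ*_{-j}: satisfy [E_{ij}, E_{kl}] = δ_{jk} E_{il} − δ_{li} E_{kj} + α(E_{ij}, E_{kl}), where α(E_{ij}, E_{ji}) = 1 if i ≤ 0 and j ≥ 1, α(E_{ji}, E_{ij}) = −1 if i ≤ 0 and j ≥ 1, and α = 0 otherwise, the identity holding as operators on the fermionic Fock space. -/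
/-!
Up to a central scalar, `:ψ_i ψ*_{-j}:` equals `ψ_i ψ*_{-j}`, and scalars drop out of
commutators. For plain products, `[ab, cd] = a{b,c}d - ac{b,d} + {a,c}db - c{a,d}b` together
with the anticommutation relations gives `δ_{jk} ψ_i ψ*_{-l} - δ_{li} ψ_k ψ*_{-j}`. Re-expressing
these products through normally ordered ones leaves the scalar `δ_{jk}δ_{li}([i ≤ 0] - [j ≤ 0])`,
which is `α`.
-/

section Commutator

variable {R : Type*} [Ring R]

theorem lie_mul_mul_eq_anticomm (a b c d : R) :
    ⁅a * b, c * d⁆ = a * (b * c + c * b) * d - a * c * (b * d + d * b) +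
      (a * c + c * a) * d * b - c * (a * d + d * a) * b := by
  rw [Ring.lie_def]
  noncomm_ring

theorem lie_mul_mul_of_anticomm {a b c d e₁ e₂ : R}
    (hbc : b * c + c * b = e₁) (had : a * d + d * a = e₂)
    (hac : a * c + c * a = 0) (hbd : b * d + d * b = 0)
    (he₁ : Commute e₁ a) (he₂ : Commute e₂ c) :
    ⁅a * b, c * d⁆ = e₁ * (a * d) - e₂ * (c * b) := by
  rw [lie_mul_mul_eq_anticomm, hbc, had, hac, hbd, ← he₁.eq, ← he₂.eq]
  noncomm_ring

theorem lie_sub_sub_of_commute {x y s t : R}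
    (hxt : Commute x t) (hsy : Commute s y) (hst : Commute s t) :
    ⁅x - s, y - t⁆ = ⁅x, y⁆ := by
  simp only [Ring.lie_def, sub_mul, mul_sub, hxt.eq, hsy.eq, hst.eq]
  abel

theorem commute_ite_one_zero (p : Prop) [Decidable p] (x : R) :
    Commute (if p then 1 else 0 : R) x := by
  split_ifs
  exacts [Commute.one_left x, Commute.zero_left x]

end Commutator

section Clifford

variable {R : Type*} [Ring R]

/-- `normalOrder ψ ψd i j` is `:ψ_i ψ*_{-j}:`, where `ψd` stands for `ψ*`. -/
def normalOrder (ψ ψd : ℤ → R) (i j : ℤ) : R :=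
  if i ≤ 0 then -(ψd (-j) * ψ i) else ψ i * ψd (-j)

variable {ψ ψd : ℤ → R}

theorem normalOrder_eq_mul_sub
    (hψψd : ∀ i j, ψ i * ψd j + ψd j * ψ i = if i + j = 0 then 1 else 0) (i j : ℤ) :
    normalOrder ψ ψd i j = ψ i * ψd (-j) - if i ≤ 0 ∧ i = j then 1 else 0 := by
  have hanti : ψd (-j) * ψ i = (if i + -j = 0 then 1 else 0) - ψ i * ψd (-j) :=
    eq_sub_of_add_eq' (hψψd i (-j))
  rw [normalOrder, hanti]
  split_ifs <;> first | omega | abel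

theorem lie_normalOrder
    (hψψ : ∀ i j, ψ i * ψ j + ψ j * ψ i = 0)
    (hψdψd : ∀ i j, ψd i * ψd j + ψd j * ψd i = 0)
    (hψψd : ∀ i j, ψ i * ψd j + ψd j * ψ i = if i + j = 0 then 1 else 0) (i j k l : ℤ) :
    ⁅normalOrder ψ ψd i j, normalOrder ψ ψd k l⁆ =
      (if j = k then ψ i * ψd (-l) else 0) - (if l = i then ψ k * ψd (-j) else 0) := by
  have hbc : ψd (-j) * ψ k + ψ k * ψd (-j) = if k + -j = 0 then 1 else 0 :=
    (add_comm _ _).trans (hψψd k (-j))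
  rw [normalOrder_eq_mul_sub hψψd, normalOrder_eq_mul_sub hψψd,
    lie_sub_sub_of_commute (commute_ite_one_zero _ _).symm (commute_ite_one_zero _ _)
      (commute_ite_one_zero _ _),
    lie_mul_mul_of_anticomm hbc (hψψd i (-l)) (hψψ i k) (hψdψd (-j) (-l))
      (commute_ite_one_zero _ _) (commute_ite_one_zero _ _)]
  simp only [ite_mul, one_mul, zero_mul]
  split_ifs <;> first | omega | rfl

end Clifford

/-- In any representation `F` of the Clifford algebra with generators `ψ_i, ψ*_j` and
relations `{ψ_i, ψ_j} = {ψ*_i, ψ*_j} = 0`, `{ψ_i, ψ*_j} = δ_{i+j,0}` (in particular on the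
fermionic Fock space, which is such a representation), the normally ordered quadratic
operators `E_{ij} = :ψ_i ψ*_{-j}:` satisfy
`[E_{ij}, E_{kl}] = δ_{jk} E_{il} - δ_{li} E_{kj} + α(E_{ij}, E_{kl}) · 1`,
where `α(E_{ij}, E_{ji}) = 1` if `i ≤ 0, j ≥ 1`, `α(E_{ji}, E_{ij}) = -1` if `i ≤ 0, j ≥ 1`,
and `α = 0` otherwise. -/
theorem stmt9 (F : Type*) [AddCommGroup F] [Module ℂ F]
    (ψ ψd : ℤ → Module.End ℂ F)
    (hψψ : ∀ i j, ψ i * ψ j + ψ j * ψ i = 0)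
    (hψdψd : ∀ i j, ψd i * ψd j + ψd j * ψd i = 0)
    (hψψd : ∀ i j, ψ i * ψd j + ψd j * ψ i = if i + j = 0 then 1 else 0)
    (E : ℤ → ℤ → Module.End ℂ F)
    (hE : ∀ i j, E i j = if i ≤ 0 then -(ψd (-j) * ψ i) else ψ i * ψd (-j))
    (α : ℤ → ℤ → ℤ → ℤ → ℂ)
    (hα : ∀ i j k l, α i j k l =
      if k = j ∧ l = i ∧ i ≤ 0 ∧ 1 ≤ j then 1
      else if k = j ∧ l = i ∧ j ≤ 0 ∧ 1 ≤ i then -1 else 0) :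
    ∀ i j k l, E i j * E k l - E k l * E i j =
      (if j = k then E i l else 0) - (if l = i then E k j else 0) +
        α i j k l • (1 : Module.End ℂ F) := by
  obtain rfl : E = normalOrder ψ ψd := funext fun i => funext (hE i)
  intro i j k l
  rw [← Ring.lie_def, lie_normalOrder hψψ hψdψd hψψd, normalOrder_eq_mul_sub hψψd i l,
    normalOrder_eq_mul_sub hψψd k j, hα]
  split_ifs <;> first | omega | (simp only [one_smul, neg_smul, zero_smul]; abel)
end

section
/- The function α on pairs of matrix units defined by α(E_{ij}, E_{ji}) = 1 and α(E_{ji}, E_{ij}) = −1 for i ≤ 0, j ≥ 1, and α = 0 otherwise, extends to a Lie algebra 2-cocycle on the Lie algebra of ℤ×ℤ matrices with finitely many nonzero diagonals. -/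
/-- Matrices `(a_{ij})_{i,j ∈ ℤ}` with finitely many nonzero diagonals. -/
def HasFinDiag (a : ℤ → ℤ → ℂ) : Prop :=
  ∃ d : ℕ, ∀ i j : ℤ, (d : ℤ) < |i - j| → a i j = 0

/-- The commutator bracket on `ℤ × ℤ` matrices (the sum is finite on matrices with finitely
many nonzero diagonals). -/
noncomputable def matBrk (a b : ℤ → ℤ → ℂ) : ℤ → ℤ → ℂ :=
  fun i j => ∑ᶠ k : ℤ, (a i k * b k j - b i k * a k j)

/-- The matrix unit `E_{ij}`. -/
def matUnit (i j : ℤ) : ℤ → ℤ → ℂ :=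
  fun p q => if p = i ∧ q = j then 1 else 0

/-!
The cocycle is `α(a, b) = Tr([J, a] b)` with `J = ∑_{i ≤ 0} E_{ii}`. The entry `(J_i - J_j) a_{ij}`
of `[J, a]` vanishes unless `i` and `j` lie on opposite sides of `1/2`, so for a banded `a` the
matrix `[J, a]` is supported in a finite block and the trace is a finite sum. On a large enough
block `{-N, …, N}` every value of `α` needed is the trace of the corresponding truncated finite
matrices, and there bilinearity is clear, `Tr([J, b] a) = -Tr([J, a] b)`, and the cocycle identity
`Tr([J, [a, b]] c) + Tr([J, [b, c]] a) + Tr([J, [c, a]] b) = 0` follows from cyclicity of the trace.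
-/

namespace Matrix
variable {n R : Type*} [Fintype n] [CommRing R]

theorem trace_lie_mul_comm (J a b : Matrix n n R) :
    trace (⁅J, b⁆ * a) = -trace (⁅J, a⁆ * b) := by
  have cycle (x y : Matrix n n R) : trace (x * (J * y)) = trace (J * (y * x)) := by
    rw [trace_mul_comm, Matrix.mul_assoc]
  simp only [Ring.lie_def, sub_mul, trace_sub, Matrix.mul_assoc, cycle]
  ring

theorem trace_lie_lie_mul_cyclic (J a b c : Matrix n n R) :
    trace (⁅J, ⁅a, b⁆⁆ * c) + trace (⁅J, ⁅b, c⁆⁆ * a) + trace (⁅J, ⁅c, a⁆⁆ * b) = 0 := by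
  have cycle (x y z : Matrix n n R) : trace (x * (y * (J * z))) = trace (J * (z * (x * y))) := by
    rw [← Matrix.mul_assoc, trace_mul_comm, Matrix.mul_assoc]
  simp only [Ring.lie_def, sub_mul, mul_sub, trace_sub, Matrix.mul_assoc, cycle]
  ring

theorem trace_lie_diagonal_mul [DecidableEq n] (d : n → R) (a b : Matrix n n R) :
    trace (⁅diagonal d, a⁆ * b) = ∑ i, ∑ j, (d i - d j) * a i j * b j i := by
  simp only [trace, diag_apply, mul_apply, Ring.lie_def]
  refine Finset.sum_congr rfl fun i _ => Finset.sum_congr rfl fun j _ => ?_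
  rw [sub_apply, diagonal_mul, mul_diagonal]
  ring

end Matrix

open Finset Matrix

section Banded

variable {R : Type*}

def BandedBy [Zero R] (a : ℤ → ℤ → R) (d : ℕ) : Prop :=
  ∀ i j : ℤ, (d : ℤ) < |i - j| → a i j = 0

theorem BandedBy.mono [Zero R] {a : ℤ → ℤ → R} {d N : ℕ} (h : BandedBy a d) (hdN : d ≤ N) :
    BandedBy a N :=
  fun i j hij => h i j (lt_of_le_of_lt (by exact_mod_cast hdN) hij)

theorem BandedBy.abs_sub_le [Zero R] {a : ℤ → ℤ → R} {d : ℕ} (h : BandedBy a d) {i j : ℤ}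
    (hij : a i j ≠ 0) : |i - j| ≤ d :=
  not_lt.mp fun hlt => hij (h i j hlt)

def truncate (N : ℕ) (a : ℤ → ℤ → R) : Matrix (Icc (-N : ℤ) N) (Icc (-N : ℤ) N) R :=
  Matrix.of fun i j => a i j

theorem truncate_add [Add R] (N : ℕ) (a b : ℤ → ℤ → R) :
    truncate N (a + b) = truncate N a + truncate N b := rfl

theorem truncate_smul {S : Type*} [SMul S R] (N : ℕ) (t : S) (a : ℤ → ℤ → R) :
    truncate N (t • a) = t • truncate N a := rfl

end Banded

noncomputable def projDiag (i : ℤ) : ℂ := if i ≤ 0 then 1 else 0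

noncomputable def projBlock (N : ℕ) : Matrix (Icc (-N : ℤ) N) (Icc (-N : ℤ) N) ℂ :=
  diagonal fun i => projDiag i

noncomputable def traceCocycle (a b : ℤ → ℤ → ℂ) : ℂ :=
  ∑ᶠ p : ℤ × ℤ, (projDiag p.1 - projDiag p.2) * a p.1 p.2 * b p.2 p.1

theorem projDiag_eq_projDiag_iff {i j : ℤ} : projDiag i = projDiag j ↔ (i ≤ 0 ↔ j ≤ 0) := by
  unfold projDiag
  by_cases hi : i ≤ 0 <;> by_cases hj : j ≤ 0 <;> simp [hi, hj]

theorem abs_le_of_projDiag_ne {i j N : ℤ} (hJ : projDiag i ≠ projDiag j) (hij : |i - j| ≤ N) :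
    |i| ≤ N ∧ |j| ≤ N := by
  rw [Ne, projDiag_eq_projDiag_iff] at hJ
  simp only [abs_le] at hij ⊢
  omega

section Cocycle

variable {a b c : ℤ → ℤ → ℂ} {d N : ℕ}

theorem traceCocycle_eq_trace (h : BandedBy a N ∨ BandedBy b N) :
    traceCocycle a b = trace (⁅projBlock N, truncate N a⁆ * truncate N b) := by
  have hsupp : (Function.support fun p : ℤ × ℤ =>
      (projDiag p.1 - projDiag p.2) * a p.1 p.2 * b p.2 p.1) ⊆
        ↑(Icc (-N : ℤ) N ×ˢ Icc (-N : ℤ) N) := by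
    rintro ⟨i, j⟩ hp
    obtain ⟨⟨hJ, ha⟩, hb⟩ : (projDiag i - projDiag j ≠ 0 ∧ a i j ≠ 0) ∧ b j i ≠ 0 := by
      simpa [not_or] using hp
    have hij : |i - j| ≤ N :=
      h.elim (·.abs_sub_le ha) fun hbN => abs_sub_comm i j ▸ hbN.abs_sub_le hb
    obtain ⟨hi, hj⟩ := abs_le_of_projDiag_ne (sub_ne_zero.mp hJ) hij
    exact mem_coe.mpr (mem_product.mpr ⟨mem_Icc.mpr (abs_le.mp hi), mem_Icc.mpr (abs_le.mp hj)⟩)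
  rw [projBlock, trace_lie_diagonal_mul, traceCocycle, finsum_eq_sum_of_support_subset _ hsupp,
    sum_product, ← sum_coe_sort]
  exact sum_congr rfl fun i _ => (sum_coe_sort _ _).symm

theorem traceCocycle_add_left (hc : BandedBy c N) :
    traceCocycle (a + b) c = traceCocycle a c + traceCocycle b c := by
  simp only [traceCocycle_eq_trace (Or.inr hc), truncate_add, Ring.lie_def, mul_add, add_mul,
    sub_mul, trace_add, trace_sub]
  ring

theorem traceCocycle_add_right (ha : BandedBy a N) :
    traceCocycle a (b + c) = traceCocycle a b + traceCocycle a c := by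
  simp only [traceCocycle_eq_trace (Or.inl ha), truncate_add, mul_add, trace_add]

theorem traceCocycle_smul_left (hb : BandedBy b N) (t : ℂ) :
    traceCocycle (t • a) b = t * traceCocycle a b := by
  simp only [traceCocycle_eq_trace (Or.inr hb), truncate_smul, Ring.lie_def, mul_smul_comm,
    smul_mul_assoc, ← smul_sub, trace_smul, smul_eq_mul]

theorem traceCocycle_smul_right (ha : BandedBy a N) (t : ℂ) :
    traceCocycle a (t • b) = t * traceCocycle a b := by
  simp only [traceCocycle_eq_trace (Or.inl ha), truncate_smul, mul_smul_comm, trace_smul,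
    smul_eq_mul]

theorem traceCocycle_comm (ha : BandedBy a N) : traceCocycle b a = -traceCocycle a b := by
  rw [traceCocycle_eq_trace (Or.inr ha), traceCocycle_eq_trace (Or.inl ha)]
  exact trace_lie_mul_comm _ _ _

theorem matBrk_apply_eq_sum (ha : BandedBy a d) (hb : BandedBy b d) {i : ℤ} (hi : |i| + d ≤ N)
    (j : ℤ) : matBrk a b i j = ∑ k : Icc (-N : ℤ) N, (a i k * b k j - b i k * a k j) := by
  refine (finsum_eq_sum_of_support_subset _ fun k hk => ?_).trans (sum_coe_sort _ _).symm
  have hik : |i - k| ≤ d := by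
    by_cases hak : a i k = 0
    · exact hb.abs_sub_le fun hbk => hk (by simp [hak, hbk])
    · exact ha.abs_sub_le hak
  rw [abs_le] at hik
  rw [coe_Icc, Set.mem_Icc]
  constructor <;> cases abs_cases i <;> omega

/-- Only entries `(i, j)` with `|i| ≤ d` contribute to the left side, and for them the sum
defining `matBrk a b i j` runs inside the block `{-N, …, N}`. -/
theorem traceCocycle_matBrk (hN : 2 * d ≤ N) (ha : BandedBy a d) (hb : BandedBy b d)
    (hc : BandedBy c d) : traceCocycle (matBrk a b) c =
      trace (⁅projBlock N, ⁅truncate N a, truncate N b⁆⁆ * truncate N c) := by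
  rw [traceCocycle_eq_trace (Or.inr (hc.mono (N := N) (by omega))), projBlock,
    trace_lie_diagonal_mul, trace_lie_diagonal_mul]
  refine sum_congr rfl fun i _ => sum_congr rfl fun j _ => ?_
  by_cases hJ : projDiag i = projDiag j
  · simp [hJ]
  by_cases hcji : c j i = 0
  · simp [truncate, hcji]
  have hi := (abs_le_of_projDiag_ne hJ ((abs_sub_comm _ _).trans_le (hc.abs_sub_le hcji))).1
  congr 2
  rw [Ring.lie_def, Matrix.sub_apply, mul_apply, mul_apply, ← sum_sub_distrib]
  exact matBrk_apply_eq_sum ha hb (by omega) j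

theorem traceCocycle_matBrk_cyclic (ha : BandedBy a d) (hb : BandedBy b d) (hc : BandedBy c d) :
    traceCocycle (matBrk a b) c + traceCocycle (matBrk b c) a +
      traceCocycle (matBrk c a) b = 0 := by
  rw [traceCocycle_matBrk le_rfl ha hb hc, traceCocycle_matBrk le_rfl hb hc ha,
    traceCocycle_matBrk le_rfl hc ha hb]
  exact trace_lie_lie_mul_cyclic _ _ _ _

end Cocycle

theorem traceCocycle_matUnit (i j k l : ℤ) :
    traceCocycle (matUnit i j) (matUnit k l) =
      if j = k ∧ i = l then projDiag i - projDiag j else 0 := by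
  rw [traceCocycle, finsum_eq_single _ (i, j)]
  · simp [matUnit, and_comm]
  · rintro ⟨p, q⟩ hpq
    have : ¬(p = i ∧ q = j) := fun h => hpq (Prod.ext h.1 h.2)
    simp [matUnit, this]

/-- The function `α` with `α(E_{ij}, E_{ji}) = 1`, `α(E_{ji}, E_{ij}) = -1` for
`i ≤ 0, j ≥ 1`, and `α = 0` on all other pairs of matrix units, extends to a Lie algebra
2-cocycle (bilinear, antisymmetric, Jacobi-type identity) on the Lie algebra `ā_∞` of
`ℤ × ℤ` matrices with finitely many nonzero diagonals. -/
theorem stmt10 :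
    ∃ α : (ℤ → ℤ → ℂ) → (ℤ → ℤ → ℂ) → ℂ,
      (∀ a b c, HasFinDiag a → HasFinDiag b → HasFinDiag c →
        α (a + b) c = α a c + α b c ∧ α a (b + c) = α a b + α a c) ∧
      (∀ (t : ℂ) a b, HasFinDiag a → HasFinDiag b →
        α (t • a) b = t * α a b ∧ α a (t • b) = t * α a b) ∧
      (∀ a b, HasFinDiag a → HasFinDiag b → α b a = -α a b) ∧
      (∀ a b c, HasFinDiag a → HasFinDiag b → HasFinDiag c →
        α (matBrk a b) c + α (matBrk b c) a + α (matBrk c a) b = 0) ∧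
      (∀ i j : ℤ, i ≤ 0 → 1 ≤ j →
        α (matUnit i j) (matUnit j i) = 1 ∧ α (matUnit j i) (matUnit i j) = -1) ∧
      (∀ i j k l : ℤ, ¬(k = j ∧ l = i ∧ ((i ≤ 0 ∧ 1 ≤ j) ∨ (j ≤ 0 ∧ 1 ≤ i))) →
        α (matUnit i j) (matUnit k l) = 0) := by
  refine ⟨traceCocycle, ?_, ?_, ?_, ?_, ?_, ?_⟩
  · rintro a b c ⟨_, ha⟩ - ⟨_, hc⟩
    exact ⟨traceCocycle_add_left hc, traceCocycle_add_right ha⟩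
  · rintro t a b ⟨_, ha⟩ ⟨_, hb⟩
    exact ⟨traceCocycle_smul_left hb t, traceCocycle_smul_right ha t⟩
  · rintro a b ⟨_, ha⟩ -
    exact traceCocycle_comm ha
  · rintro a b c ⟨da, ha⟩ ⟨db, hb⟩ ⟨dc, hc⟩
    exact traceCocycle_matBrk_cyclic (d := da + db + dc) (BandedBy.mono ha (by omega))
      (BandedBy.mono hb (by omega)) (BandedBy.mono hc (by omega))
  · intro i j hi hj
    have hj' : ¬j ≤ 0 := by omega
    simp [traceCocycle_matUnit, projDiag, hi, hj']
  · intro i j k l h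
    rw [traceCocycle_matUnit]
    split_ifs with hkl
    · rw [sub_eq_zero, projDiag_eq_projDiag_iff]
      omega
    · rfl
end

section
/- In the Lie algebra a_∞ = ā_∞ ⊕ ℂc (central extension by the cocycle α), the elements Λ_j = Σ_{k∈ℤ} E_{k,k+j} satisfy the Heisenberg relations [Λ_i, Λ_j] = i δ_{i+j,0} c. -/
/-- The 2-cocycle of `a_∞`: `α(a, b) = Σ_{i ≤ 0 < j} (a_{ij} b_{ji} - a_{ji} b_{ij})`,
the bilinear extension of `α(E_{ij}, E_{ji}) = -α(E_{ji}, E_{ij}) = 1` for `i ≤ 0, j ≥ 1`. -/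
noncomputable def alphaCocycle (a b : ℤ → ℤ → ℂ) : ℂ :=
  ∑ᶠ p : ℤ × ℤ, if p.1 ≤ 0 ∧ 1 ≤ p.2 then
    a p.1 p.2 * b p.2 p.1 - a p.2 p.1 * b p.1 p.2 else 0

/-- `Λ_j = Σ_{k ∈ ℤ} E_{k, k+j}`, the matrix of the `j`-th diagonal. -/
def Lam (j : ℤ) : ℤ → ℤ → ℂ :=
  fun p q => if q = p + j then 1 else 0

/-!
Since `Λ_i Λ_j = Λ_{i+j} = Λ_j Λ_i`, the matrix part of the bracket vanishes. A term of
`α(Λ_i, Λ_j)` pairs an entry of `Λ_i` at `(p, q)` with one of `Λ_j` at `(q, p)`, so it vanishes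
unless `i + j = 0`. Then `α(Λ_i, Λ_{-i})` is the number of entries of the `i`-th diagonal in the
block `p ≤ 0 < q`, namely `max(i, 0)`, minus that of the `(-i)`-th diagonal, `max(-i, 0)`.
-/

open Finset Function

theorem Lam_apply_add_left (i j p q : ℤ) : Lam j (p + i) q = Lam (i + j) p q := by
  simp only [Lam, add_assoc]

theorem Lam_swap (i p q : ℤ) : Lam i q p = Lam (-i) p q := by
  simp only [Lam]
  congr 1
  exact propext (by omega)

theorem Lam_mul_Lam_swap (i j p q : ℤ) :
    Lam i p q * Lam j q p = if i + j = 0 then Lam i p q else 0 := by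
  simp only [Lam]
  split_ifs <;> first | omega | simp

theorem hasFiniteSupport_Lam_mul (i p : ℤ) (f : ℤ → ℂ) :
    HasFiniteSupport fun k => Lam i p k * f k :=
  (Set.finite_singleton (p + i)).subset fun k hk => by
    by_contra hne
    exact hk (by simp [Lam, show k ≠ p + i from hne])

theorem finsum_Lam_mul (i p : ℤ) (f : ℤ → ℂ) : ∑ᶠ k, Lam i p k * f k = f (p + i) := by
  rw [finsum_eq_single _ (p + i) fun k hk => by simp [Lam, hk]]
  simp [Lam]

theorem matBrk_Lam_Lam (i j : ℤ) : matBrk (Lam i) (Lam j) = 0 := by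
  funext p q
  rw [matBrk, finsum_sub_distrib (hasFiniteSupport_Lam_mul _ _ _) (hasFiniteSupport_Lam_mul _ _ _),
    finsum_Lam_mul, finsum_Lam_mul, Lam_apply_add_left, Lam_apply_add_left, add_comm j, sub_self,
    Pi.zero_apply, Pi.zero_apply]

noncomputable def cornerDiag (n : ℤ) : Finset (ℤ × ℤ) :=
  (Finset.Icc (1 - n) 0).image fun a => (a, a + n)

theorem mem_cornerDiag {n : ℤ} {p : ℤ × ℤ} :
    p ∈ cornerDiag n ↔ p.1 ≤ 0 ∧ 1 ≤ p.2 ∧ p.2 = p.1 + n := by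
  obtain ⟨a, b⟩ := p
  simp only [cornerDiag, mem_image, mem_Icc, Prod.mk.injEq]
  constructor
  · rintro ⟨a, ⟨h1, h2⟩, rfl, rfl⟩
    omega
  · rintro ⟨h1, h2, rfl⟩
    exact ⟨a, ⟨by omega, h1⟩, rfl, rfl⟩

def cornerLam (n : ℤ) (p : ℤ × ℤ) : ℂ :=
  if p.1 ≤ 0 ∧ 1 ≤ p.2 then Lam n p.1 p.2 else 0

theorem cornerLam_eq_indicator (n : ℤ) :
    cornerLam n = (cornerDiag n : Set (ℤ × ℤ)).indicator 1 := by
  funext p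
  simp only [cornerLam, Lam, Set.indicator_apply, mem_coe, mem_cornerDiag, Pi.one_apply]
  split_ifs <;> first | rfl | omega

theorem hasFiniteSupport_cornerLam (n : ℤ) : HasFiniteSupport (cornerLam n) := by
  rw [cornerLam_eq_indicator]
  exact (cornerDiag n).finite_toSet.subset Set.support_indicator_subset

theorem finsum_cornerLam (n : ℤ) : ∑ᶠ p, cornerLam n p = n.toNat := by
  rw [cornerLam_eq_indicator, ← finsum_mem_def, finsum_mem_coe_finset, Pi.one_def, sum_const,
    nsmul_one, cornerDiag, card_image_of_injective _ fun _ _ h => congrArg Prod.fst h, Int.card_Icc]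
  simp

theorem alphaCocycle_Lam_Lam (i j : ℤ) :
    alphaCocycle (Lam i) (Lam j) = if i + j = 0 then (i : ℂ) else 0 := by
  unfold alphaCocycle
  simp only [Lam_mul_Lam_swap]
  split_ifs with hij
  · have hterm : ∀ p : ℤ × ℤ, (if p.1 ≤ 0 ∧ 1 ≤ p.2 then Lam i p.1 p.2 - Lam i p.2 p.1 else 0)
        = cornerLam i p - cornerLam (-i) p := fun p => by
      rw [cornerLam, cornerLam, ite_sub_ite, sub_zero, Lam_swap i p.1 p.2]
    rw [finsum_congr hterm, finsum_sub_distrib (hasFiniteSupport_cornerLam _)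
      (hasFiniteSupport_cornerLam _), finsum_cornerLam, finsum_cornerLam]
    exact_mod_cast Int.toNat_sub_toNat_neg i
  · simp

/-- In `a_∞ = ā_∞ ⊕ ℂc` (central extension by the cocycle `α`), the elements
`Λ_j` satisfy the Heisenberg relations `[Λ_i, Λ_j] = i δ_{i+j,0} c`: the matrix part of
the bracket vanishes and the central part equals `i δ_{i+j,0}`. -/
theorem stmt11 (i j : ℤ) :
    matBrk (Lam i) (Lam j) = 0 ∧
      alphaCocycle (Lam i) (Lam j) = if i + j = 0 then (i : ℂ) else 0 :=
  ⟨matBrk_Lam_Lam i j, alphaCocycle_Lam_Lam i j⟩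
end

section
/- The images of the affine sl₂ generators under the embedding into a_∞ (e_k ↦ Σ_s E_{2s+1, 2(s+k)+2}, etc., K ↦ c) commute with Λ_{2j} for every j ≠ 0: [e_k, Λ_{2j}] = [f_k, Λ_{2j}] = [h_k, Λ_{2j}] = 0 in a_∞. -/
/-- Image of `e_k` in `a_∞`: `Σ_s E_{2s+1, 2(s+k)+2}`. -/
def eMat (k : ℤ) : ℤ → ℤ → ℂ :=
  fun p q => if p % 2 = 1 ∧ q = p + 2 * k + 1 then 1 else 0

/-- Image of `f_k` in `a_∞`: `Σ_s E_{2s+2, 2(s+k)+1}`. -/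
def fMat (k : ℤ) : ℤ → ℤ → ℂ :=
  fun p q => if p % 2 = 0 ∧ q = p + 2 * k - 1 then 1 else 0

/-- Image of `h_k` in `a_∞`: `Σ_s (E_{2s+1, 2(s+k)+1} - E_{2s+2, 2(s+k)+2})`. -/
def hMat (k : ℤ) : ℤ → ℤ → ℂ :=
  fun p q => if p % 2 = 1 ∧ q = p + 2 * k then 1
    else if p % 2 = 0 ∧ q = p + 2 * k then -1 else 0

open Function Finset

theorem finsum_eq_sum_of_support_subset_image {α ι M : Type*} [AddCommMonoid M]
    {f : α → M} {φ : ι → α} (hφ : Injective φ) {s : Finset ι}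
    (h : support f ⊆ φ '' s) : ∑ᶠ x, f x = ∑ i ∈ s, f (φ i) := by
  classical
  rw [finsum_eq_finsetSum_of_support_subset f (s := s.image φ) (by simpa using h),
    sum_image hφ.injOn]

theorem matBrk_Lam_apply (a : ℤ → ℤ → ℂ) (m i q : ℤ) :
    matBrk a (Lam m) i q = a i (q - m) - a (i + m) q := by
  have hleft : ∀ s, s ≠ q - m → a i s * Lam m s q = 0 := fun s hs => by
    simp [Lam, show q ≠ s + m by omega]
  have hright : ∀ s, s ≠ i + m → Lam m i s * a s q = 0 := fun s hs => by
    simp [Lam, hs]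
  rw [matBrk, finsum_sub_distrib
      ((Set.finite_singleton (q - m)).subset (support_subset_iff'.2 hleft))
      ((Set.finite_singleton (i + m)).subset (support_subset_iff'.2 hright)),
    finsum_eq_single _ _ hleft, finsum_eq_single _ _ hright]
  simp [Lam]

theorem matBrk_Lam_eq_zero {a : ℤ → ℤ → ℂ} {m : ℤ}
    (ha : ∀ p q, a (p + m) (q + m) = a p q) : matBrk a (Lam m) = 0 := by
  ext i q
  rw [matBrk_Lam_apply, ← ha i (q - m), sub_add_cancel, sub_self, Pi.zero_apply, Pi.zero_apply]

theorem alphaCocycle_Lam (a : ℤ → ℤ → ℂ) (m : ℤ) :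
    alphaCocycle a (Lam m) =
      ∑ q ∈ Icc 1 (-m), a (q + m) q - ∑ q ∈ Icc (1 - m) 0, a (q + m) q := by
  set below : ℤ × ℤ → ℂ := fun p =>
    if p.1 ≤ 0 ∧ 1 ≤ p.2 then a p.1 p.2 * Lam m p.2 p.1 else 0
  set above : ℤ × ℤ → ℂ := fun p =>
    if p.1 ≤ 0 ∧ 1 ≤ p.2 then a p.2 p.1 * Lam m p.1 p.2 else 0
  have hbelow : support below ⊆ (fun q => (q + m, q)) '' Icc 1 (-m) := by
    rintro ⟨x, y⟩ hxy
    simp only [below, Lam, mem_support] at hxy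
    split_ifs at hxy with hbox hdiag
    · exact ⟨y, by simp only [coe_Icc, Set.mem_Icc]; omega, Prod.ext hdiag.symm rfl⟩
    all_goals simp at hxy
  have habove : support above ⊆ (fun q => (q, q + m)) '' Icc (1 - m) 0 := by
    rintro ⟨x, y⟩ hxy
    simp only [above, Lam, mem_support] at hxy
    split_ifs at hxy with hbox hdiag
    · exact ⟨x, by simp only [coe_Icc, Set.mem_Icc]; omega, Prod.ext rfl hdiag.symm⟩
    all_goals simp at hxy
  have hsplit : alphaCocycle a (Lam m) = ∑ᶠ p, (below p - above p) :=
    finsum_congr fun p => by simp only [below, above]; split_ifs <;> simp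
  rw [hsplit, finsum_sub_distrib (((Icc 1 (-m)).finite_toSet.image _).subset hbelow)
      (((Icc (1 - m) 0).finite_toSet.image _).subset habove),
    finsum_eq_sum_of_support_subset_image (fun q r h => by simpa using congrArg Prod.snd h) hbelow,
    finsum_eq_sum_of_support_subset_image (fun q r h => by simpa using congrArg Prod.fst h) habove]
  congr 1 <;> refine sum_congr rfl fun q hq => ?_ <;> rw [mem_Icc] at hq <;>
    simp only [below, above, Lam, ↓reduceIte, mul_one] <;> exact if_pos (by omega)

def altSign (q : ℤ) : ℂ := if q % 2 = 1 then 1 else -1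

theorem sum_Icc_altSign_eq_zero {a b : ℤ} (ha : a % 2 = 1) (hb : b % 2 = 0) :
    ∑ q ∈ Icc a b, altSign q = 0 := by
  refine sum_involution (fun q _ => if q % 2 = 1 then q + 1 else q - 1) ?_ ?_ ?_ ?_
  all_goals
    intro q hq
    simp only [mem_Icc, altSign] at hq ⊢
  · split_ifs <;> first | ring1 | (exfalso; omega)
  · split_ifs <;> omega
  · split_ifs <;> omega
  · split_ifs <;> omega

section Generators

variable (k j p q : ℤ)

theorem eMat_shift_two_mul : eMat k (p + 2 * j) (q + 2 * j) = eMat k p q := by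
  simp only [eMat]; exact if_congr (by omega) rfl rfl

theorem fMat_shift_two_mul : fMat k (p + 2 * j) (q + 2 * j) = fMat k p q := by
  simp only [fMat]; exact if_congr (by omega) rfl rfl

theorem hMat_shift_two_mul : hMat k (p + 2 * j) (q + 2 * j) = hMat k p q := by
  simp only [hMat]; exact if_congr (by omega) rfl (if_congr (by omega) rfl rfl)

theorem eMat_add_two_mul_self : eMat k (q + 2 * j) q = 0 := by
  simp only [eMat]; exact if_neg (by omega)

theorem fMat_add_two_mul_self : fMat k (q + 2 * j) q = 0 := by
  simp only [fMat]; exact if_neg (by omega)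

theorem hMat_add_two_mul_self : hMat k (q + 2 * j) q = if k = -j then altSign q else 0 := by
  simp only [hMat, altSign]; split_ifs <;> first | rfl | omega

end Generators

theorem alphaCocycle_hMat_Lam (k j : ℤ) : alphaCocycle (hMat k) (Lam (2 * j)) = 0 := by
  simp only [alphaCocycle_Lam, hMat_add_two_mul_self]
  split_ifs
  · rw [sum_Icc_altSign_eq_zero (by omega) (by omega),
      sum_Icc_altSign_eq_zero (by omega) (by omega), sub_zero]
  · simp

theorem stmt13_general (k j : ℤ) :
    (matBrk (eMat k) (Lam (2 * j)) = 0 ∧ alphaCocycle (eMat k) (Lam (2 * j)) = 0) ∧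
    (matBrk (fMat k) (Lam (2 * j)) = 0 ∧ alphaCocycle (fMat k) (Lam (2 * j)) = 0) ∧
    (matBrk (hMat k) (Lam (2 * j)) = 0 ∧ alphaCocycle (hMat k) (Lam (2 * j)) = 0) := by
  refine ⟨⟨matBrk_Lam_eq_zero (eMat_shift_two_mul k j), ?_⟩,
    ⟨matBrk_Lam_eq_zero (fMat_shift_two_mul k j), ?_⟩,
    ⟨matBrk_Lam_eq_zero (hMat_shift_two_mul k j), alphaCocycle_hMat_Lam k j⟩⟩
  · simp [alphaCocycle_Lam, eMat_add_two_mul_self]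
  · simp [alphaCocycle_Lam, fMat_add_two_mul_self]

/-- The images of the affine `sl₂` generators in `a_∞` commute with `Λ_{2j}` for `j ≠ 0`:
both the matrix part and the cocycle (central) part of the brackets vanish. -/
theorem stmt13 (k j : ℤ) (hj : j ≠ 0) :
    (matBrk (eMat k) (Lam (2 * j)) = 0 ∧ alphaCocycle (eMat k) (Lam (2 * j)) = 0) ∧
    (matBrk (fMat k) (Lam (2 * j)) = 0 ∧ alphaCocycle (fMat k) (Lam (2 * j)) = 0) ∧
    (matBrk (hMat k) (Lam (2 * j)) = 0 ∧ alphaCocycle (hMat k) (Lam (2 * j)) = 0) :=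
  stmt13_general k j
end
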